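/- arXiv:2211.04449 — 2 statements merged into one kernel-verified Lean document; each statement's English description precedes it below -/
import Mathlib

section
/- Let y₂ ∈ ℝ^{n-m}, X₂ ∈ ℝ^{(n-m)×p}, β ∈ ℝᵖ nonzero, and η_{c₂} ≥ 0 with ‖y₂ - X₂β‖₂ > η_{c₂}·‖β‖₂. Then the minimum over c₂ with ‖c₂‖₂ ≤ η_{c₂} and d with ‖d‖₂ ≤ 1 of ‖y₂ - X₂β - c₂(dᵀβ)‖₂² equals (‖y₂ - X₂β‖₂ - η_{c₂}·‖β‖₂)². -/
open RealInnerProductSpace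

/-! The perturbation `⟪d, β⟫ • c₂` ranges over vectors of norm at most `ηc₂ * ‖β‖`, so by the
reverse triangle inequality the residual keeps norm at least `‖y₂ - X₂β‖ - ηc₂ * ‖β‖`. The bound
is attained by aligning `d` with `β` and `c₂` with the residual. -/

section

variable {E F : Type*} [NormedAddCommGroup E] [InnerProductSpace ℝ E]
  [NormedAddCommGroup F] [InnerProductSpace ℝ F]

lemma norm_inner_smul_le {c : E} {d β : F} {η : ℝ} (hc : ‖c‖ ≤ η) (hd : ‖d‖ ≤ 1) :
    ‖⟪d, β⟫ • c‖ ≤ η * ‖β‖ :=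
  calc ‖⟪d, β⟫ • c‖ = |⟪d, β⟫| * ‖c‖ := by rw [norm_smul, Real.norm_eq_abs]
    _ ≤ ‖β‖ * η := by
      have hinner : |⟪d, β⟫| ≤ ‖β‖ :=
        (abs_real_inner_le_norm d β).trans (mul_le_of_le_one_left (norm_nonneg β) hd)
      exact mul_le_mul hinner hc (norm_nonneg c) (norm_nonneg β)
    _ = η * ‖β‖ := mul_comm _ _

lemma exists_norm_le_one_inner_eq_norm (β : F) : ∃ d : F, ‖d‖ ≤ 1 ∧ ⟪d, β⟫ = ‖β‖ := by
  -- the junk value `‖0‖⁻¹ = 0` makes this `d = 0` when `β = 0`, which still works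
  refine ⟨‖β‖⁻¹ • β, ?_, ?_⟩
  · rw [norm_smul, norm_inv, norm_norm]
    exact inv_mul_le_one_of_le₀ le_rfl (norm_nonneg β)
  · rw [real_inner_smul_left, real_inner_self_eq_norm_sq, sq, ← mul_assoc, inv_mul_mul_self]

lemma norm_sub_div_norm_smul_self (r : E) {ρ : ℝ} (hρ : 0 ≤ ρ) (hρr : ρ ≤ ‖r‖) :
    ‖r - (ρ / ‖r‖) • r‖ = ‖r‖ - ρ := by
  rcases (norm_nonneg r).eq_or_lt with hr | hr
  · obtain rfl : ρ = 0 := le_antisymm (hr ▸ hρr) hρ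
    simp [← hr]
  · have hratio : ρ / ‖r‖ ≤ 1 := (div_le_one hr).mpr hρr
    rw [show r - (ρ / ‖r‖) • r = (1 - ρ / ‖r‖) • r by rw [sub_smul, one_smul], norm_smul,
      Real.norm_of_nonneg (sub_nonneg.mpr hratio), sub_mul, one_mul, div_mul_cancel₀ _ hr.ne']

theorem isLeast_norm_sub_inner_smul_sq (r : E) (β : F) {η : ℝ} (hη : 0 ≤ η)
    (hβr : η * ‖β‖ ≤ ‖r‖) :
    IsLeast {v : ℝ | ∃ c : E, ∃ d : F, ‖c‖ ≤ η ∧ ‖d‖ ≤ 1 ∧ v = ‖r - ⟪d, β⟫ • c‖ ^ 2}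
      ((‖r‖ - η * ‖β‖) ^ 2) := by
  constructor
  · obtain ⟨d, hd, hdβ⟩ := exists_norm_le_one_inner_eq_norm β
    refine ⟨(η / ‖r‖) • r, d, ?_, hd, ?_⟩
    · rw [norm_smul, Real.norm_of_nonneg (by positivity)]
      rcases eq_or_ne ‖r‖ 0 with hr | hr <;> simp [hr, hη]
    · rw [hdβ, smul_smul, show ‖β‖ * (η / ‖r‖) = η * ‖β‖ / ‖r‖ by ring,
        norm_sub_div_norm_smul_self r (by positivity) hβr]
  · rintro v ⟨c, d, hc, hd, rfl⟩
    have hlower : ‖r‖ - η * ‖β‖ ≤ ‖r - ⟪d, β⟫ • c‖ := by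
      linarith [norm_sub_norm_le r (⟪d, β⟫ • c), norm_inner_smul_le (β := β) hc hd]
    exact pow_le_pow_left₀ (sub_nonneg.mpr hβr) hlower 2

end

theorem stmt10_general {q p : ℕ} (y₂ : EuclideanSpace ℝ (Fin q)) (X₂ : Matrix (Fin q) (Fin p) ℝ)
    (β : EuclideanSpace ℝ (Fin p)) {ηc₂ : ℝ} (hηc₂ : 0 ≤ ηc₂)
    (hres : ‖y₂ - (WithLp.equiv 2 (Fin q → ℝ)).symm
        (X₂.mulVec (WithLp.equiv 2 (Fin p → ℝ) β))‖ > ηc₂ * ‖β‖) :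
    IsLeast
      {v : ℝ | ∃ c₂ : EuclideanSpace ℝ (Fin q), ∃ d : EuclideanSpace ℝ (Fin p),
        ‖c₂‖ ≤ ηc₂ ∧ ‖d‖ ≤ 1 ∧
        v = ‖y₂ - (WithLp.equiv 2 (Fin q → ℝ)).symm
              (X₂.mulVec (WithLp.equiv 2 (Fin p → ℝ) β)) - ⟪d, β⟫ • c₂‖ ^ 2}
      ((‖y₂ - (WithLp.equiv 2 (Fin q → ℝ)).symm
          (X₂.mulVec (WithLp.equiv 2 (Fin p → ℝ) β))‖ - ηc₂ * ‖β‖) ^ 2) :=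
  isLeast_norm_sub_inner_smul_sq _ β hηc₂ hres.le

/-- For `y₂ ∈ ℝ^{n-m}`, `X₂ ∈ ℝ^{(n-m)×p}`, nonzero `β ∈ ℝᵖ`, and
`η_{c₂} ≥ 0` with `‖y₂ - X₂β‖ > η_{c₂} ‖β‖`, the minimum over `c₂` with
`‖c₂‖ ≤ η_{c₂}` and `d` with `‖d‖ ≤ 1` of `‖y₂ - X₂β - (dᵀβ) c₂‖²` equals
`(‖y₂ - X₂β‖ - η_{c₂} ‖β‖)²`. -/
theorem stmt10 {q p : ℕ} (y₂ : EuclideanSpace ℝ (Fin q)) (X₂ : Matrix (Fin q) (Fin p) ℝ)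
    (β : EuclideanSpace ℝ (Fin p)) (hβ : β ≠ 0) {ηc₂ : ℝ} (hηc₂ : 0 ≤ ηc₂)
    (hres : ‖y₂ - (WithLp.equiv 2 (Fin q → ℝ)).symm
        (X₂.mulVec (WithLp.equiv 2 (Fin p → ℝ) β))‖ > ηc₂ * ‖β‖) :
    IsLeast
      {v : ℝ | ∃ c₂ : EuclideanSpace ℝ (Fin q), ∃ d : EuclideanSpace ℝ (Fin p),
        ‖c₂‖ ≤ ηc₂ ∧ ‖d‖ ≤ 1 ∧
        v = ‖y₂ - (WithLp.equiv 2 (Fin q → ℝ)).symm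
              (X₂.mulVec (WithLp.equiv 2 (Fin p → ℝ) β)) - ⟪d, β⟫ • c₂‖ ^ 2}
      ((‖y₂ - (WithLp.equiv 2 (Fin q → ℝ)).symm
          (X₂.mulVec (WithLp.equiv 2 (Fin p → ℝ) β))‖ - ηc₂ * ‖β‖) ^ 2) :=
  stmt10_general y₂ X₂ β hηc₂ hres
end

section
/- Let a, b ≥ 0, w > 0, η > 0, and C_g > D_g > 0. Define g_a(t) = C_g·(a + t·w)² + D_g·(b + √(η² - t²)·w)² on (0, η). If t* ∈ (0, η) is a critical point of g_a, then g_a is increasing on (0, t*) and decreasing on (t*, η); that is, any interior critical point of g_a is its unique maximizer on [0, η]. -/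
set_option maxHeartbeats 1600000 in
/-- For `a, b ≥ 0`, `w > 0`, `η > 0` and `C_g > D_g > 0`, if
`t* ∈ (0, η)` is a critical point of
`g_a(t) = C_g (a + t w)² + D_g (b + √(η² - t²) w)²`, then `g_a` is increasing on
`(0, t*)` and decreasing on `(t*, η)`; in particular `t*` is the unique maximizer
of `g_a` on `[0, η]`. -/
theorem stmt13 {a b Cg Dg w η t : ℝ} (ha : 0 ≤ a) (hb : 0 ≤ b) (hw : 0 < w)
    (hη : 0 < η) (hDg : 0 < Dg) (hCgDg : Dg < Cg) (ht : t ∈ Set.Ioo 0 η)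
    (hcrit : deriv
      (fun s : ℝ => Cg * (a + s * w) ^ 2 + Dg * (b + Real.sqrt (η ^ 2 - s ^ 2) * w) ^ 2)
      t = 0) :
    StrictMonoOn
      (fun s : ℝ => Cg * (a + s * w) ^ 2 + Dg * (b + Real.sqrt (η ^ 2 - s ^ 2) * w) ^ 2)
      (Set.Ioo 0 t) ∧
    StrictAntiOn
      (fun s : ℝ => Cg * (a + s * w) ^ 2 + Dg * (b + Real.sqrt (η ^ 2 - s ^ 2) * w) ^ 2)
      (Set.Ioo t η) ∧
    ∀ s ∈ Set.Icc (0 : ℝ) η, s ≠ t →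
      Cg * (a + s * w) ^ 2 + Dg * (b + Real.sqrt (η ^ 2 - s ^ 2) * w) ^ 2 <
      Cg * (a + t * w) ^ 2 + Dg * (b + Real.sqrt (η ^ 2 - t ^ 2) * w) ^ 2 := by
  obtain ⟨ht0, htη⟩ := ht
  set g : ℝ → ℝ := fun s => Cg * (a + s * w) ^ 2 + Dg * (b + Real.sqrt (η ^ 2 - s ^ 2) * w) ^ 2
    with hgdef
  have hCg : 0 < Cg := hDg.trans hCgDg
  -- derivative formula
  have hderiv : ∀ s ∈ Set.Ioo (0:ℝ) η, HasDerivAt g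
      (2 * w * (Cg * a + (Cg - Dg) * w * s - Dg * b * (s / Real.sqrt (η ^ 2 - s ^ 2)))) s := by
    intro s hs
    obtain ⟨hs0, hsη⟩ := hs
    have hpos : 0 < η ^ 2 - s ^ 2 := by nlinarith
    have hr : 0 < Real.sqrt (η ^ 2 - s ^ 2) := Real.sqrt_pos.mpr hpos
    have hrsq : Real.sqrt (η ^ 2 - s ^ 2) ^ 2 = η ^ 2 - s ^ 2 := Real.sq_sqrt hpos.le
    have h1 : HasDerivAt (fun s : ℝ => η ^ 2 - s ^ 2) (-(2 * s)) s := by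
      simpa using ((hasDerivAt_pow 2 s).const_sub (η ^ 2))
    have h2 : HasDerivAt (fun s : ℝ => Real.sqrt (η ^ 2 - s ^ 2))
        (-(2 * s) / (2 * Real.sqrt (η ^ 2 - s ^ 2))) s := h1.sqrt (ne_of_gt hpos)
    have hf1 : HasDerivAt (fun s : ℝ => a + s * w) w s := by
      simpa using ((hasDerivAt_id s).mul_const w).const_add a
    have hf2 : HasDerivAt (fun s : ℝ => b + Real.sqrt (η ^ 2 - s ^ 2) * w)
        ((-(2 * s) / (2 * Real.sqrt (η ^ 2 - s ^ 2))) * w) s := (h2.mul_const w).const_add b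
    have h3 : HasDerivAt g
        (Cg * ((2 : ℕ) * (a + s * w) ^ 1 * w) +
          Dg * ((2 : ℕ) * (b + Real.sqrt (η ^ 2 - s ^ 2) * w) ^ 1 *
            ((-(2 * s) / (2 * Real.sqrt (η ^ 2 - s ^ 2))) * w))) s :=
      ((hf1.pow 2).const_mul Cg).add ((hf2.pow 2).const_mul Dg)
    convert h3 using 1
    field_simp
    ring
  have hrt : 0 < Real.sqrt (η ^ 2 - t ^ 2) := Real.sqrt_pos.mpr (by nlinarith)
  have heq0 : Cg * a + (Cg - Dg) * w * t - Dg * b * (t / Real.sqrt (η ^ 2 - t ^ 2)) = 0 := by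
    have := (hderiv t ⟨ht0, htη⟩).deriv
    rw [hcrit] at this
    have h2w : (0:ℝ) < 2 * w := by linarith
    nlinarith [this]
  have htv : 0 < t / Real.sqrt (η ^ 2 - t ^ 2) := div_pos ht0 hrt
  have hbpos : 0 < b := by
    by_contra h
    push_neg at h
    have h1 : Dg * b * (t / Real.sqrt (η ^ 2 - t ^ 2)) ≤ 0 :=
      mul_nonpos_of_nonpos_of_nonneg (mul_nonpos_of_nonneg_of_nonpos hDg.le h) htv.le
    nlinarith [mul_pos (mul_pos (sub_pos.mpr hCgDg) hw) ht0, mul_nonneg hCg.le ha]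
  -- sign of the derivative
  have hsign_pos : ∀ s ∈ Set.Ioo (0:ℝ) t,
      0 < Cg * a + (Cg - Dg) * w * s - Dg * b * (s / Real.sqrt (η ^ 2 - s ^ 2)) := by
    intro s ⟨hs0, hst⟩
    have hsη : s < η := hst.trans htη
    have hrs : 0 < Real.sqrt (η ^ 2 - s ^ 2) := Real.sqrt_pos.mpr (by nlinarith)
    have hrlt : Real.sqrt (η ^ 2 - t ^ 2) < Real.sqrt (η ^ 2 - s ^ 2) :=
      Real.sqrt_lt_sqrt (by nlinarith) (by nlinarith)
    have hkey : (s / Real.sqrt (η ^ 2 - s ^ 2)) * t < (t / Real.sqrt (η ^ 2 - t ^ 2)) * s := by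
      rw [div_mul_eq_mul_div, div_mul_eq_mul_div]
      rw [div_lt_div_iff₀ hrs hrt]
      nlinarith [mul_lt_mul_of_pos_left hrlt (mul_pos hs0 ht0)]
    nlinarith [mul_pos hDg hbpos, mul_nonneg (mul_nonneg hCg.le ha) (sub_nonneg.mpr hst.le),
      mul_lt_mul_of_pos_left hkey (mul_pos hDg hbpos)]
  have hsign_neg : ∀ s ∈ Set.Ioo t η,
      Cg * a + (Cg - Dg) * w * s - Dg * b * (s / Real.sqrt (η ^ 2 - s ^ 2)) < 0 := by
    intro s ⟨hts, hsη⟩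
    have hs0 : 0 < s := ht0.trans hts
    have hrs : 0 < Real.sqrt (η ^ 2 - s ^ 2) := Real.sqrt_pos.mpr (by nlinarith)
    have hrlt : Real.sqrt (η ^ 2 - s ^ 2) < Real.sqrt (η ^ 2 - t ^ 2) :=
      Real.sqrt_lt_sqrt (by nlinarith) (by nlinarith)
    have hkey : (t / Real.sqrt (η ^ 2 - t ^ 2)) * s < (s / Real.sqrt (η ^ 2 - s ^ 2)) * t := by
      rw [div_mul_eq_mul_div, div_mul_eq_mul_div]
      rw [div_lt_div_iff₀ hrt hrs]
      nlinarith [mul_lt_mul_of_pos_left hrlt (mul_pos hs0 ht0)]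
    nlinarith [mul_pos hDg hbpos, mul_nonneg (mul_nonneg hCg.le ha) (sub_nonneg.mpr hts.le),
      mul_lt_mul_of_pos_left hkey (mul_pos hDg hbpos)]
  have hsqc : Continuous fun s : ℝ => Real.sqrt (η ^ 2 - s ^ 2) :=
    Real.continuous_sqrt.comp (by continuity)
  have hcont : Continuous g :=
    ((continuous_const.mul
        ((continuous_const.add (continuous_id.mul continuous_const)).pow 2)).add
      (continuous_const.mul ((continuous_const.add (hsqc.mul continuous_const)).pow 2)))
  have hmono : StrictMonoOn g (Set.Icc 0 t) := by
    apply strictMonoOn_of_deriv_pos (convex_Icc 0 t) hcont.continuousOn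
    intro s hs
    rw [interior_Icc] at hs
    obtain ⟨hs0, hst⟩ := hs
    have hsI : s ∈ Set.Ioo (0:ℝ) η := ⟨hs0, hst.trans htη⟩
    rw [(hderiv s hsI).deriv]
    have := hsign_pos s ⟨hs0, hst⟩
    positivity
  have hanti : StrictAntiOn g (Set.Icc t η) := by
    apply strictAntiOn_of_deriv_neg (convex_Icc t η) hcont.continuousOn
    intro s hs
    rw [interior_Icc] at hs
    obtain ⟨hts, hsη⟩ := hs
    have hsI : s ∈ Set.Ioo (0:ℝ) η := ⟨ht0.trans hts, hsη⟩
    rw [(hderiv s hsI).deriv]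
    have := hsign_neg s ⟨hts, hsη⟩
    have h2w : (0:ℝ) < 2 * w := by linarith
    nlinarith
  refine ⟨hmono.mono (by intro x hx; exact ⟨hx.1.le, hx.2.le⟩),
    hanti.mono (by intro x hx; exact ⟨hx.1.le, hx.2.le⟩), ?_⟩
  intro s hs hne
  rcases lt_or_gt_of_ne hne with hlt | hgt
  · exact hmono ⟨hs.1, hlt.le⟩ ⟨ht0.le, le_refl t⟩ hlt
  · exact hanti ⟨le_refl t, htη.le⟩ ⟨hgt.le, hs.2⟩ hgt
end
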